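/- Let φ₁(r) := r/√(1+r²) and f₀(r) := (1+r²)^{3/2} log(r + √(1+r²))/r - (1+r²)/2. Then for every r > 0, (d/dr)(r φ₁'(r) f₀(r)) = ½ r² φ₁'(r) + φ₁(r)/(2r). Equivalently, with h ≡ 1/2 and f = f₀, the quantity E(r) = ½ r φ₁'(r) + h φ₁(r)/r² - (r φ₁'(r) f₀(r))'/r vanishes identically on (0,∞). -/

import Mathlib

/-!
Since `φ₁'(r) = (1+r²)^{-3/2}` and `log(r + √(1+r²)) = arsinh r`, the flux simplifies to
`r φ₁'(r) f₀(r) = arsinh r - φ₁(r)/2`, whose derivative `(1+r²)^{-1/2} - φ₁'(r)/2` is the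
right-hand side. The vanishing of `E` is the same identity divided by `r`.
-/

noncomputable section

/-- The profile `φ₁(r) = r/√(1+r²)`. -/
def phi1 (r : ℝ) : ℝ := r / Real.sqrt (1 + r ^ 2)

/-- The coefficient function `f₀(r) = (1+r²)^{3/2} log(r + √(1+r²))/r - (1+r²)/2`. -/
def f0 (r : ℝ) : ℝ :=
  (1 + r ^ 2) ^ ((3:ℝ)/2) * Real.log (r + Real.sqrt (1 + r ^ 2)) / r - (1 + r ^ 2) / 2

open Real

lemma Real.rpow_three_halves {x : ℝ} (hx : 0 ≤ x) : x ^ ((3:ℝ)/2) = √x ^ 3 := by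
  rw [sqrt_eq_rpow, ← rpow_natCast, ← rpow_mul hx]
  norm_num

lemma hasDerivAt_phi1 (s : ℝ) :
    HasDerivAt phi1 (1 / ((1 + s ^ 2) * √(1 + s ^ 2))) s := by
  have hpos : 0 < 1 + s ^ 2 := by positivity
  have hsq : √(1 + s ^ 2) ^ 2 = 1 + s ^ 2 := sq_sqrt hpos.le
  have hsqrt : HasDerivAt (fun x ↦ √(1 + x ^ 2)) (1 / (2 * √(1 + s ^ 2)) * (2 * s)) s :=
    (hasDerivAt_sqrt hpos.ne').comp s (by simpa using (hasDerivAt_pow 2 s).const_add 1)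
  have hquot : HasDerivAt phi1 _ s := (hasDerivAt_id s).div hsqrt (sqrt_pos.mpr hpos).ne'
  convert hquot using 1
  simp only [id]
  field_simp
  linear_combination (-s ^ 2) * hsq

lemma deriv_phi1 (s : ℝ) : deriv phi1 s = 1 / ((1 + s ^ 2) * √(1 + s ^ 2)) :=
  (hasDerivAt_phi1 s).deriv

lemma mul_deriv_phi1_mul_f0 {s : ℝ} (hs : 0 < s) :
    s * deriv phi1 s * f0 s = arsinh s - phi1 s / 2 := by
  have hpos : 0 < 1 + s ^ 2 := by positivity
  have hsq : √(1 + s ^ 2) ^ 2 = 1 + s ^ 2 := sq_sqrt hpos.le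
  have := sqrt_pos.mpr hpos
  rw [deriv_phi1, f0, phi1, arsinh, rpow_three_halves hpos.le]
  field_simp
  linear_combination (2 * √(1 + s ^ 2) * log (s + √(1 + s ^ 2))) * hsq

lemma deriv_mul_deriv_phi1_mul_f0 {r : ℝ} (hr : 0 < r) :
    deriv (fun s ↦ s * deriv phi1 s * f0 s) r = (√(1 + r ^ 2))⁻¹ - deriv phi1 r / 2 := by
  have hflux : (fun s ↦ s * deriv phi1 s * f0 s) =ᶠ[nhds r] fun s ↦ arsinh s - phi1 s / 2 := by
    filter_upwards [eventually_gt_nhds hr] with s hs using mul_deriv_phi1_mul_f0 hs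
  rw [hflux.deriv_eq, deriv_phi1]
  exact ((hasDerivAt_arsinh r).sub ((hasDerivAt_phi1 r).div_const 2)).deriv

/-- **`f₀` solves the radial ODE `E = 0` for the profile `φ₁` with `h ≡ 1/2`.**
For every `r > 0`, `(r φ₁'(r) f₀(r))' = ½ r² φ₁'(r) + φ₁(r)/(2r)`; equivalently, the radial
error `E(r) = ½ r φ₁' + (1/2) φ₁/r² - (r φ₁' f₀)'/r` vanishes identically on `(0,∞)`. -/
theorem f0_solves_radial_ode :
    ∀ r : ℝ, 0 < r →
      deriv (fun s => s * deriv phi1 s * f0 s) r =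
          (1 / 2) * r ^ 2 * deriv phi1 r + phi1 r / (2 * r) ∧
      (1 / 2) * r * deriv phi1 r + (1 / 2) * phi1 r / r ^ 2 -
          deriv (fun s => s * deriv phi1 s * f0 s) r / r = 0 := by
  intro r hr
  have hflux : deriv (fun s => s * deriv phi1 s * f0 s) r =
      (1 / 2) * r ^ 2 * deriv phi1 r + phi1 r / (2 * r) := by
    have hpos : 0 < 1 + r ^ 2 := by positivity
    have := sqrt_pos.mpr hpos
    rw [deriv_mul_deriv_phi1_mul_f0 hr, deriv_phi1, phi1]
    field_simp
    ring
  refine ⟨hflux, ?_⟩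
  rw [hflux]
  field_simp
  ring
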